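/- arXiv:2605.06499 — 4 statements merged into one kernel-verified Lean document; each statement's English description precedes it below -/
import Mathlib

section
/- Let R be a commutative ring, J ⊆ R an ideal, and suppose the reduction map R → R/J is surjective on the level of rings (it always is). Then the induced group homomorphism Sp_{2n}(R) → Sp_{2n}(R/J) on symplectic groups is surjective whenever R is a PID and R/J is a field. -/
/-!
Over a field `k`, left multiplication by a unipotent `fromBlocks 1 X 0 1` with `X` symmetric makes
the upper-left block of a symplectic matrix invertible, and a symplectic matrix with invertible
upper-left block `A` factors as a lower unipotent, the Levi element `fromBlocks A 0 0 A⁻¹ᵀ` and an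
upper unipotent. Unipotents with symmetric blocks lift entrywise along any surjection `R → k`.
Levi elements lift because `A` is a product of transvections, which lift, and of a diagonal matrix
`S`, whose Levi element is a product of unipotents and `J`.
-/

open Matrix

namespace Matrix

theorem transvection_map {l R k : Type*} [DecidableEq l] [CommRing R] [CommRing k]
    (f : R →+* k) (i j : l) (c : R) :
    (transvection i j c).map f = transvection i j (f c) := by
  simp [transvection, Matrix.map_add]

theorem exists_isSymm_map_eq {n R k : Type*} {f : R → k}
    (hf : Function.Surjective f) {S : Matrix n n k} (hS : S.IsSymm) :
    ∃ S' : Matrix n n R, S'.IsSymm ∧ S'.map f = S :=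
  ⟨S.map (Function.surjInv hf), hS.map _, by
    rw [Matrix.map_map, Function.comp_def]; simp [Function.surjInv_eq hf]⟩

variable {n : Type*} [Fintype n] [DecidableEq n]

theorem map_nonsing_inv {R k : Type*} [CommRing R] [CommRing k] (f : R →+* k) {M : Matrix n n R}
    (hM : IsUnit M.det) : M⁻¹.map f = (M.map f)⁻¹ :=
  (inv_eq_right_inv <| by
    rw [← Matrix.map_mul, mul_nonsing_inv _ hM, Matrix.map_one _ f.map_zero f.map_one]).symm

theorem isSymm_mul_nonsing_inv {R : Type*} [CommRing R] {A C : Matrix n n R} (hA : IsUnit A.det)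
    (h : Aᵀ * C = Cᵀ * A) : (C * A⁻¹).IsSymm := by
  rw [IsSymm, transpose_mul, transpose_nonsing_inv, ← mul_nonsing_inv_cancel_right A Cᵀ hA, ← h,
    ← Matrix.mul_assoc, ← Matrix.mul_assoc, nonsing_inv_mul _ (isUnit_det_transpose A hA),
    Matrix.one_mul]

section Field

variable {k : Type*} [Field k]

theorem exists_isSymm_det_add_mul_ne_zero_of_diagonal {d : n → k} {C : Matrix n n k}
    (hsymm : diagonal d * C = Cᵀ * diagonal d)
    (hker : ∀ x, diagonal d *ᵥ x = 0 → C *ᵥ x = 0 → x = 0) :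
    ∃ X : Matrix n n k, X.IsSymm ∧ (diagonal d + X * C).det ≠ 0 := by
  classical
  -- `diagonal e * C` puts the rows of `C` exactly where `diagonal d` has zero rows
  let e : n → k := fun i => if d i = 0 then 1 else 0
  refine ⟨diagonal e, isSymm_diagonal e, fun hdet => ?_⟩
  obtain ⟨x, hx, hMx⟩ := exists_mulVec_eq_zero_iff.2 hdet
  have hrow (i : n) : d i * x i + e i * (C *ᵥ x) i = 0 := by
    simpa [add_mulVec, ← mulVec_mulVec, mulVec_diagonal] using congrFun hMx i
  have hdx : diagonal d *ᵥ x = 0 := funext fun i => by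
    by_cases hi : d i = 0
    · simp [mulVec_diagonal, hi]
    · simpa [mulVec_diagonal, e, hi] using hrow i
  have hdCx : diagonal d *ᵥ (C *ᵥ x) = 0 := by
    rw [mulVec_mulVec, hsymm, ← mulVec_mulVec, hdx, mulVec_zero]
  have hCx : C *ᵥ x = 0 := funext fun i => by
    by_cases hi : d i = 0
    · simpa [e, hi] using hrow i
    · simpa [mulVec_diagonal, hi] using congrFun hdCx i
  exact hx (hker x hdx hCx)

theorem exists_isSymm_det_add_mul_ne_zero {A C : Matrix n n k} (hsymm : Aᵀ * C = Cᵀ * A)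
    (hker : ∀ x, A *ᵥ x = 0 → C *ᵥ x = 0 → x = 0) :
    ∃ X : Matrix n n k, X.IsSymm ∧ (A + X * C).det ≠ 0 := by
  obtain ⟨L, L', d, hPAQ⟩ := Pivot.exists_list_transvec_mul_mul_list_transvec_eq_diagonal A
  set P := (L.map TransvectionStruct.toMatrix).prod
  set Q := (L'.map TransvectionStruct.toMatrix).prod
  have hP : IsUnit P.det := by simp [P, TransvectionStruct.det_toMatrix_prod]
  have hQ : IsUnit Q.det := by simp [Q, TransvectionStruct.det_toMatrix_prod]
  set C' := P⁻¹ᵀ * C * Q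
  have hsymm' : diagonal d * C' = C'ᵀ * diagonal d := by
    conv_lhs => rw [← (isSymm_diagonal d).eq, ← hPAQ]
    rw [← hPAQ]
    simp only [C', transpose_mul, transpose_transpose, transpose_nonsing_inv, Matrix.mul_assoc,
      mul_nonsing_inv_cancel_left _ _ (isUnit_det_transpose P hP),
      nonsing_inv_mul_cancel_left _ _ hP]
    rw [← Matrix.mul_assoc Aᵀ, hsymm, Matrix.mul_assoc]
  have hker' : ∀ x, diagonal d *ᵥ x = 0 → C' *ᵥ x = 0 → x = 0 := by
    intro x hdx hCx
    rw [← hPAQ, ← mulVec_mulVec, ← mulVec_mulVec] at hdx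
    simp only [C', transpose_nonsing_inv, ← mulVec_mulVec] at hCx
    refine eq_zero_of_mulVec_eq_zero hQ.ne_zero (hker _ ?_ ?_)
    · exact eq_zero_of_mulVec_eq_zero hP.ne_zero hdx
    · have hPinvT : IsUnit Pᵀ⁻¹.det := isUnit_nonsing_inv_det _ (isUnit_det_transpose P hP)
      exact eq_zero_of_mulVec_eq_zero hPinvT.ne_zero hCx
  obtain ⟨X', hX', hdet⟩ := exists_isSymm_det_add_mul_ne_zero_of_diagonal hsymm' hker'
  refine ⟨P⁻¹ * X' * P⁻¹ᵀ, ?_, fun h => hdet ?_⟩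
  · simp [IsSymm, transpose_mul, hX'.eq, Matrix.mul_assoc]
  · have : diagonal d + X' * C' = P * (A + (P⁻¹ * X' * P⁻¹ᵀ) * C) * Q := by
      simp only [← hPAQ, C', Matrix.mul_add, Matrix.add_mul, Matrix.mul_assoc,
        mul_nonsing_inv_cancel_left _ _ hP]
    rw [this, det_mul, det_mul, h, mul_zero, zero_mul]

end Field

end Matrix

namespace SymplecticGroup

variable {l R : Type*} [DecidableEq l] [Fintype l] [CommRing R]

theorem fromBlocks_upper_unipotent_mem {S : Matrix l l R} (hS : S.IsSymm) :
    fromBlocks 1 S 0 1 ∈ symplecticGroup l R :=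
  fromBlocks_mem_iff.2 ⟨by simp, by simpa using hS.eq, by simp⟩

theorem fromBlocks_lower_unipotent_mem {S : Matrix l l R} (hS : S.IsSymm) :
    fromBlocks 1 0 S 1 ∈ symplecticGroup l R :=
  fromBlocks_mem_iff.2 ⟨by simpa using hS.symm, by simp, by simp⟩

theorem fromBlocks_levi_mem {M : Matrix l l R} (hM : IsUnit M.det) :
    fromBlocks M 0 0 M⁻¹ᵀ ∈ symplecticGroup l R :=
  fromBlocks_mem_iff.2 ⟨by simp, by simp, by simp [← transpose_mul, nonsing_inv_mul _ hM]⟩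

theorem fromBlocks_levi_mul {M N : Matrix l l R} :
    fromBlocks (M * N) 0 0 (M * N)⁻¹ᵀ = fromBlocks M 0 0 M⁻¹ᵀ * fromBlocks N 0 0 N⁻¹ᵀ := by
  simp [fromBlocks_multiply, Matrix.mul_inv_rev]

theorem fromBlocks_levi_eq_of_isSymm {S : Matrix l l R} (hS : S.IsSymm) (hdet : IsUnit S.det) :
    fromBlocks S 0 0 S⁻¹ᵀ =
      fromBlocks 1 S 0 1 * fromBlocks 1 0 (-S⁻¹) 1 * fromBlocks 1 S 0 1 * J l R := by
  simp [J, fromBlocks_multiply, mul_nonsing_inv _ hdet, nonsing_inv_mul _ hdet,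
    transpose_nonsing_inv, hS.eq]

theorem fromBlocks_eq_lower_mul_levi_mul_upper {A B C D : Matrix l l R}
    (hg : fromBlocks A B C D ∈ symplecticGroup l R) (hA : IsUnit A.det) :
    fromBlocks A B C D =
      fromBlocks 1 0 (C * A⁻¹) 1 * fromBlocks A 0 0 A⁻¹ᵀ * fromBlocks 1 (A⁻¹ * B) 0 1 := by
  obtain ⟨hAC, -, hAD⟩ := fromBlocks_mem_iff.1 hg
  have hD : D = C * A⁻¹ * B + A⁻¹ᵀ := by
    calc D = Aᵀ⁻¹ * (Aᵀ * D) :=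
          (nonsing_inv_mul_cancel_left _ _ (isUnit_det_transpose A hA)).symm
      _ = (C * A⁻¹)ᵀ * B + A⁻¹ᵀ := by
          rw [← sub_add_cancel (Aᵀ * D) (Cᵀ * B), hAD, transpose_mul, transpose_nonsing_inv,
            Matrix.mul_add, Matrix.mul_one, Matrix.mul_assoc, add_comm]
      _ = C * A⁻¹ * B + A⁻¹ᵀ := by rw [(isSymm_mul_nonsing_inv hA hAC).eq]
  simp [fromBlocks_multiply, Matrix.mul_assoc, mul_nonsing_inv_cancel_left _ _ hA,
    nonsing_inv_mul_cancel_right _ _ hA, hD]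

section Lift

variable {k : Type*} [CommRing k] {f : R →+* k}

theorem fromBlocks_upper_unipotent_mem_map (hf : Function.Surjective f) {S : Matrix l l k}
    (hS : S.IsSymm) : fromBlocks 1 S 0 1 ∈ (symplecticGroup l R).map f.mapMatrix := by
  obtain ⟨S', hS', rfl⟩ := exists_isSymm_map_eq hf hS
  exact ⟨_, fromBlocks_upper_unipotent_mem hS', by simp [fromBlocks_map]⟩

theorem fromBlocks_lower_unipotent_mem_map (hf : Function.Surjective f) {S : Matrix l l k}
    (hS : S.IsSymm) : fromBlocks 1 0 S 1 ∈ (symplecticGroup l R).map f.mapMatrix := by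
  obtain ⟨S', hS', rfl⟩ := exists_isSymm_map_eq hf hS
  exact ⟨_, fromBlocks_lower_unipotent_mem hS', by simp [fromBlocks_map]⟩

theorem J_mem_map : J l k ∈ (symplecticGroup l R).map f.mapMatrix :=
  ⟨J l R, J_mem l R, by simp⟩

theorem fromBlocks_levi_map_mem_map {M : Matrix l l R} (hM : IsUnit M.det) :
    fromBlocks (M.map f) 0 0 (M.map f)⁻¹ᵀ ∈ (symplecticGroup l R).map f.mapMatrix :=
  ⟨_, fromBlocks_levi_mem hM, by simp [fromBlocks_map, transpose_map, map_nonsing_inv f hM]⟩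

theorem fromBlocks_levi_transvection_mem_map (hf : Function.Surjective f)
    (t : TransvectionStruct l k) :
    fromBlocks t.toMatrix 0 0 t.toMatrix⁻¹ᵀ ∈ (symplecticGroup l R).map f.mapMatrix := by
  let t' : TransvectionStruct l R := ⟨t.i, t.j, t.hij, Function.surjInv hf t.c⟩
  have ht : t'.toMatrix.map f = t.toMatrix := by
    simp [t', TransvectionStruct.toMatrix, transvection_map, Function.surjInv_eq hf]
  rw [← ht]
  exact fromBlocks_levi_map_mem_map (by simp)

theorem fromBlocks_levi_mem_map_of_isSymm (hf : Function.Surjective f) {S : Matrix l l k}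
    (hS : S.IsSymm) (hdet : IsUnit S.det) :
    fromBlocks S 0 0 S⁻¹ᵀ ∈ (symplecticGroup l R).map f.mapMatrix := by
  have hS' : (-S⁻¹).IsSymm := by
    simp [Matrix.IsSymm, transpose_nonsing_inv, hS.eq]
  rw [fromBlocks_levi_eq_of_isSymm hS hdet]
  refine mul_mem (mul_mem (mul_mem ?_ ?_) ?_) J_mem_map
  · exact fromBlocks_upper_unipotent_mem_map hf hS
  · exact fromBlocks_lower_unipotent_mem_map hf hS'
  · exact fromBlocks_upper_unipotent_mem_map hf hS

end Lift

section Field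

variable {k : Type*} [Field k] {f : R →+* k}

theorem fromBlocks_levi_mem_map (hf : Function.Surjective f) {M : Matrix l l k} (hM : M.det ≠ 0) :
    fromBlocks M 0 0 M⁻¹ᵀ ∈ (symplecticGroup l R).map f.mapMatrix := by
  refine diagonal_transvection_induction_of_det_ne_zero
    (fun N => fromBlocks N 0 0 N⁻¹ᵀ ∈ (symplecticGroup l R).map f.mapMatrix) M hM
    (fun d hd => ?_)
    (fromBlocks_levi_transvection_mem_map hf) (fun A B _ _ hA hB => ?_)
  · exact fromBlocks_levi_mem_map_of_isSymm hf (isSymm_diagonal d) (isUnit_iff_ne_zero.2 hd)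
  · rw [fromBlocks_levi_mul]
    exact mul_mem hA hB

theorem fromBlocks_mem_map_of_isUnit_det (hf : Function.Surjective f) {A B C D : Matrix l l k}
    (hg : fromBlocks A B C D ∈ symplecticGroup l k) (hA : IsUnit A.det) :
    fromBlocks A B C D ∈ (symplecticGroup l R).map f.mapMatrix := by
  have hY : (A⁻¹ * B).IsSymm := by
    have hAB := (fromBlocks_mem_iff.1 (fromBlocks_transpose A B C D ▸ transpose_mem hg)).1
    simpa [IsSymm, transpose_mul, transpose_nonsing_inv] using
      (isSymm_mul_nonsing_inv (isUnit_det_transpose A hA) hAB).eq.symm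
  rw [fromBlocks_eq_lower_mul_levi_mul_upper hg hA]
  refine mul_mem (mul_mem ?_ ?_) (fromBlocks_upper_unipotent_mem_map hf hY)
  · exact fromBlocks_lower_unipotent_mem_map hf
      (isSymm_mul_nonsing_inv hA (fromBlocks_mem_iff.1 hg).1)
  · exact fromBlocks_levi_mem_map hf hA.ne_zero

theorem symplecticGroup_le_map_mapMatrix (hf : Function.Surjective f) :
    symplecticGroup l k ≤ (symplecticGroup l R).map f.mapMatrix := by
  intro g hg
  obtain ⟨A, B, C, D, rfl⟩ : ∃ A B C D, g = fromBlocks A B C D :=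
    ⟨_, _, _, _, (fromBlocks_toBlocks g).symm⟩
  obtain ⟨hAC, -, hAD⟩ := fromBlocks_mem_iff.1 hg
  -- transposing `hAD` gives `Dᵀ * A - Bᵀ * C = 1`
  have hker : ∀ x, A *ᵥ x = 0 → C *ᵥ x = 0 → x = 0 := fun x hAx hCx => by
    simpa [transpose_sub, sub_mulVec, ← mulVec_mulVec, hAx, hCx] using
      congrArg (· *ᵥ x) (congrArg transpose hAD).symm
  obtain ⟨X, hX, hdet⟩ := exists_isSymm_det_add_mul_ne_zero hAC hker
  have hXg : fromBlocks 1 X 0 1 * fromBlocks A B C D =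
      fromBlocks (A + X * C) (B + X * D) C D := by
    simp [fromBlocks_multiply]
  have hg' : fromBlocks 1 (-X) 0 1 * fromBlocks (A + X * C) (B + X * D) C D =
      fromBlocks A B C D := by
    rw [← hXg, ← Matrix.mul_assoc, fromBlocks_multiply]
    simp
  rw [← hg']
  refine mul_mem (fromBlocks_upper_unipotent_mem_map hf hX.neg) ?_
  refine fromBlocks_mem_map_of_isUnit_det hf ?_ (isUnit_iff_ne_zero.2 hdet)
  exact hXg ▸ mul_mem (fromBlocks_upper_unipotent_mem hX) hg

end Field

end SymplecticGroup

theorem symplecticGroup_reduction_surjective_general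
    (R : Type*) [CommRing R]
    (J : Ideal R) (hJ : J.IsMaximal) (n : ℕ) :
    ∀ B ∈ Matrix.symplecticGroup (Fin n) (R ⧸ J),
      ∃ A ∈ Matrix.symplecticGroup (Fin n) R,
        A.map (Ideal.Quotient.mk J) = B := by
  let _ : Field (R ⧸ J) := Ideal.Quotient.field J
  intro B hB
  exact SymplecticGroup.symplecticGroup_le_map_mapMatrix Ideal.Quotient.mk_surjective hB

/-- If `R` is a PID and `J ⊆ R` is an ideal with `R/J` a field
(i.e. `J` is maximal), then the reduction map `Sp_{2n}(R) → Sp_{2n}(R/J)` is surjective: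
every symplectic matrix over `R/J` lifts to a symplectic matrix over `R`. -/
theorem symplecticGroup_reduction_surjective
    (R : Type*) [CommRing R] [IsDomain R] [IsPrincipalIdealRing R]
    (J : Ideal R) (hJ : J.IsMaximal) (n : ℕ) :
    ∀ B ∈ Matrix.symplecticGroup (Fin n) (R ⧸ J),
      ∃ A ∈ Matrix.symplecticGroup (Fin n) R,
        A.map (Ideal.Quotient.mk J) = B :=
  symplecticGroup_reduction_surjective_general R J hJ n
end

section
/- Let V be a symplectic K-vector space of genus n and g ≥ 0. Define S to be the set of simplices σ of lines in V such that: the span of σ has genus g+1, σ has exactly i+1 vertices, no vertex of σ lies in the radical of its span, and σ is not in 𝓘^{g+½}(V). Then for any two distinct simplices σ, τ ∈ S, the union of their vertex sets spans a subspace whose number of non-radical vertices exceeds i+1; in particular σ ∪ τ is not a simplex of the filtration stage F_{i+1}. -/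
open Module LinearMap
open scoped Classical

variable {K : Type*} [Field K] {V : Type*} [AddCommGroup V] [Module K V]

/-- The span of a simplex (a finite set of lines, i.e. of submodules). -/
noncomputable def Simp.span (σ : Finset (Submodule K V)) : Submodule K V := σ.sup id

/-- The radical of a subspace with respect to a bilinear form. -/
noncomputable def Simp.rad (ω : LinearMap.BilinForm K V) (W : Submodule K V) :
    Submodule K V := W ⊓ BilinForm.orthogonal ω W

/-- The genus of a subspace: half of `dim W − dim rad W`. -/
noncomputable def Simp.genus [FiniteDimensional K V] (ω : LinearMap.BilinForm K V)
    (W : Submodule K V) : ℕ :=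
  (finrank K ↥W - finrank K ↥(Simp.rad ω W)) / 2

/-- A subspace is symplectic if the restricted form is nondegenerate. -/
def Simp.IsSymplectic (ω : LinearMap.BilinForm K V) (W : Submodule K V) : Prop :=
  ∀ v ∈ W, (∀ w ∈ W, ω v w = 0) → v = 0

/-- A subspace is isotropic if the form vanishes identically on it. -/
def Simp.IsIsotropic (ω : LinearMap.BilinForm K V) (W : Submodule K V) : Prop :=
  ∀ v ∈ W, ∀ w ∈ W, ω v w = 0

/-- A simplex of `𝒦(V)`: a nonempty finite set of lines of `V`. -/
def Simp.IsSimplex (σ : Finset (Submodule K V)) : Prop :=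
  σ.Nonempty ∧ ∀ L ∈ σ, finrank K ↥L = 1

/-- Membership in the intermediate complex `𝓘^{g+½}(V)`: either the span has genus `≤ g`,
or the simplex splits as vertices spanning a symplectic subspace `W` (of genus `≤ g+1`)
together with vertices spanning an isotropic subspace of `W^⊥`. -/
def Simp.InIhalf [FiniteDimensional K V] (ω : LinearMap.BilinForm K V) (g : ℕ)
    (σ : Finset (Submodule K V)) : Prop :=
  Simp.genus ω (Simp.span σ) ≤ g ∨
    ∃ t ⊆ σ, Simp.IsSymplectic ω (Simp.span t) ∧ Simp.genus ω (Simp.span t) ≤ g + 1 ∧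
      Simp.span (σ \ t) ≤ BilinForm.orthogonal ω (Simp.span t) ∧
      Simp.IsIsotropic ω (Simp.span (σ \ t))

/-- Membership in the filtration stage `F_m`: either in `𝓘^{g+½}(V)`, or the span has genus
`≤ g+1` and the number of non-radical vertices `n(σ) − n(rad σ)` is at most `m`. -/
def Simp.InF [FiniteDimensional K V] (ω : LinearMap.BilinForm K V) (g m : ℕ)
    (σ : Finset (Submodule K V)) : Prop :=
  Simp.InIhalf ω g σ ∨
    (Simp.genus ω (Simp.span σ) ≤ g + 1 ∧
      σ.card - (σ.filter (fun L => L ≤ Simp.rad ω (Simp.span σ))).card ≤ m)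

lemma Simp.genus_mono [FiniteDimensional K V] (ω : LinearMap.BilinForm K V)
    {U W : Submodule K V} (h : U ≤ W) : Simp.genus ω U ≤ Simp.genus ω W := by
  have h1 : U ⊓ Simp.rad ω W ≤ Simp.rad ω U := by
    intro v hv
    exact ⟨hv.1, fun w hw => hv.2.2 w (h hw)⟩
  have h2 := Submodule.finrank_sup_add_finrank_inf_eq U (Simp.rad ω W)
  have h3 : finrank K ↥(U ⊔ Simp.rad ω W) ≤ finrank K ↥W :=
    Submodule.finrank_mono (sup_le h inf_le_left)
  have h4 : finrank K ↥(U ⊓ Simp.rad ω W) ≤ finrank K ↥(Simp.rad ω U) :=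
    Submodule.finrank_mono h1
  have h5 : finrank K ↥(Simp.rad ω U) ≤ finrank K ↥U := Submodule.finrank_mono inf_le_left
  unfold Simp.genus
  omega


/-- Let `S` be the set of simplices `σ` of genus-(`g+1`) span with `i+1`
vertices, no vertex in the radical of the span, and not lying in `𝓘^{g+½}(V)`.  For distinct
`σ, τ ∈ S`, the union `σ ∪ τ` has more than `i+1` vertices outside the radical of its span;
in particular `σ ∪ τ` is not a simplex of the filtration stage `F_{i+1}`. -/
theorem union_of_distinct_critical_simplices_not_in_filtration
    [FiniteDimensional K V]
    (ω : LinearMap.BilinForm K V)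
    (halt : ∀ v : V, ω v v = 0)
    (hnondeg : ∀ v : V, (∀ w : V, ω v w = 0) → v = 0)
    (g i : ℕ)
    (σ τ : Finset (Submodule K V))
    (hσ : Simp.IsSimplex σ) (hτ : Simp.IsSimplex τ)
    (hσg : Simp.genus ω (Simp.span σ) = g + 1)
    (hτg : Simp.genus ω (Simp.span τ) = g + 1)
    (hσcard : σ.card = i + 1) (hτcard : τ.card = i + 1)
    (hσrad : ∀ L ∈ σ, ¬ L ≤ Simp.rad ω (Simp.span σ))
    (hτrad : ∀ L ∈ τ, ¬ L ≤ Simp.rad ω (Simp.span τ))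
    (hσI : ¬ Simp.InIhalf ω g σ) (hτI : ¬ Simp.InIhalf ω g τ)
    (hne : σ ≠ τ) :
    i + 1 <
      ((σ ∪ τ).filter (fun L => ¬ L ≤ Simp.rad ω (Simp.span (σ ∪ τ)))).card ∧
    ¬ Simp.InF ω g (i + 1) (σ ∪ τ) := by
  have hskew : ∀ v w : V, ω w v = - ω v w := by
    intro v w
    have h := halt (v + w)
    simp only [map_add, LinearMap.add_apply, halt] at h
    linear_combination h
  -- no vertex of σ ∪ τ is in the radical of span (σ ∪ τ)
  have hkey : ∀ L ∈ σ ∪ τ, ¬ L ≤ Simp.rad ω (Simp.span (σ ∪ τ)) := by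
    intro L hL hrad
    have horth : BilinForm.orthogonal ω (Simp.span (σ ∪ τ)) ≤
        BilinForm.orthogonal ω (Simp.span σ) ⊓ BilinForm.orthogonal ω (Simp.span τ) :=
      le_inf (BilinForm.orthogonal_le (Finset.sup_mono Finset.subset_union_left))
        (BilinForm.orthogonal_le (Finset.sup_mono Finset.subset_union_right))
    rcases Finset.mem_union.mp hL with h | h
    · exact hσrad L h (le_inf (Finset.le_sup (f := id) h)
        (hrad.trans (inf_le_right.trans (horth.trans inf_le_left))))
    · exact hτrad L h (le_inf (Finset.le_sup (f := id) h)
        (hrad.trans (inf_le_right.trans (horth.trans inf_le_right))))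
  have hfilter : (σ ∪ τ).filter (fun L => ¬ L ≤ Simp.rad ω (Simp.span (σ ∪ τ))) = σ ∪ τ :=
    Finset.filter_true_of_mem hkey
  have hcardlt : i + 1 < (σ ∪ τ).card := by
    rcases lt_or_ge (i + 1) (σ ∪ τ).card with h | h
    · exact h
    · exfalso
      have h1 : σ = σ ∪ τ :=
        Finset.eq_of_subset_of_card_le Finset.subset_union_left (by omega)
      have h2 : τ = σ ∪ τ :=
        Finset.eq_of_subset_of_card_le Finset.subset_union_right (by omega)
      exact hne (h1.trans h2.symm)
  refine ⟨by rwa [hfilter], ?_⟩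
  rintro (h | ⟨-, hcount⟩)
  · -- σ ∪ τ ∈ Ihalf: contradiction
    rcases h with h | ⟨t, hts, hsymp, hgen, horth, hiso⟩
    · have hmono : Simp.genus ω (Simp.span σ) ≤ Simp.genus ω (Simp.span (σ ∪ τ)) :=
        Simp.genus_mono ω (Finset.sup_mono Finset.subset_union_left)
      exact hσI (Or.inl (hmono.trans h))
    · -- every vertex of (σ∪τ)\t is in rad(span(σ∪τ)); so t = σ∪τ
      have hrest : Simp.span ((σ ∪ τ) \ t) ≤ Simp.rad ω (Simp.span (σ ∪ τ)) := by
        refine le_inf (Finset.sup_mono (Finset.sdiff_subset)) ?_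
        intro v hv
        rw [BilinForm.mem_orthogonal_iff]
        intro w hw
        have hspan : Simp.span (σ ∪ τ) = Simp.span t ⊔ Simp.span ((σ ∪ τ) \ t) := by
          rw [Simp.span, Simp.span, Simp.span, ← Finset.sup_union,
            Finset.union_sdiff_of_subset hts]
        rw [hspan] at hw
        rcases Submodule.mem_sup.mp hw with ⟨a, ha, b, hb, rfl⟩
        have h1 : ω a v = 0 := (horth hv) a ha
        have h2 : ω b v = 0 := hiso b hb v hv
        show ω (a + b) v = 0
        rw [map_add, LinearMap.add_apply, h1, h2, add_zero]
      have hempty : (σ ∪ τ) \ t = ∅ := by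
        by_contra hne'
        obtain ⟨L, hL⟩ := Finset.nonempty_iff_ne_empty.mpr hne'
        exact hkey L (Finset.mem_sdiff.mp hL).1
          (le_trans (Finset.le_sup (f := @id (Submodule K V)) hL) hrest)
      have ht : t = σ ∪ τ := by
        apply Finset.Subset.antisymm hts
        intro x hx
        by_contra hxt
        have : x ∈ (σ ∪ τ) \ t := Finset.mem_sdiff.mpr ⟨hx, hxt⟩
        simp [hempty] at this
      subst ht
      -- so span(σ∪τ) is symplectic with genus ≤ g+1
      -- span σ is not symplectic (else σ ∈ Ihalf)
      have hσnotsymp : ¬ Simp.IsSymplectic ω (Simp.span σ) := by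
        intro hs
        apply hσI
        right
        refine ⟨σ, Finset.Subset.refl σ, hs, le_of_eq hσg, ?_, ?_⟩
        · rw [Finset.sdiff_self]
          simp [Simp.span]
        · rw [Finset.sdiff_self]
          intro v hv
          simp only [Simp.span, Finset.sup_empty, Submodule.mem_bot] at hv
          subst hv
          intro w _
          simp
      -- rad(span σ) ≠ ⊥
      obtain ⟨v, hvmem, hv0, hvne⟩ : ∃ v ∈ Simp.span σ,
          (∀ w ∈ Simp.span σ, ω v w = 0) ∧ v ≠ 0 := by
        by_contra hc
        push_neg at hc
        exact hσnotsymp hc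
      have hvrad : v ∈ Simp.rad ω (Simp.span σ) := by
        have hvo : v ∈ BilinForm.orthogonal ω (Simp.span σ) :=
          BilinForm.mem_orthogonal_iff.mpr (fun w hw => by
            show ω w v = 0
            rw [hskew v w, hv0 w hw, neg_zero])
        exact Submodule.mem_inf.mpr ⟨hvmem, hvo⟩
      have hradpos : 0 < finrank K ↥(Simp.rad ω (Simp.span σ)) := by
        rcases Nat.eq_zero_or_pos (finrank K ↥(Simp.rad ω (Simp.span σ))) with h0 | h0
        · exfalso
          have : Simp.rad ω (Simp.span σ) = ⊥ := Submodule.finrank_eq_zero.mp h0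
          rw [this] at hvrad
          exact hvne (Submodule.mem_bot K |>.mp hvrad)
        · exact h0
      -- rad(span(σ∪τ)) = ⊥
      have hradU : Simp.rad ω (Simp.span (σ ∪ τ)) = ⊥ := by
        rw [Submodule.eq_bot_iff]
        intro x hx
        refine hsymp x hx.1 fun w hw => ?_
        have h2 : ω w x = 0 := (BilinForm.mem_orthogonal_iff.mp hx.2) w hw
        rw [hskew x w] at h2
        linear_combination -h2
      have hradU0 : finrank K ↥(Simp.rad ω (Simp.span (σ ∪ τ))) = 0 := by
        rw [hradU]; exact finrank_bot K V
      -- dimension bounds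
      have hdσr : finrank K ↥(Simp.rad ω (Simp.span σ)) ≤ finrank K ↥(Simp.span σ) :=
        Submodule.finrank_mono inf_le_left
      have hle : Simp.span σ ≤ Simp.span (σ ∪ τ) :=
        Finset.sup_mono Finset.subset_union_left
      have hdd : finrank K ↥(Simp.span σ) ≤ finrank K ↥(Simp.span (σ ∪ τ)) :=
        Submodule.finrank_mono hle
      have hgσ : (finrank K ↥(Simp.span σ) - finrank K ↥(Simp.rad ω (Simp.span σ))) / 2
          = g + 1 := hσg
      have hgU : finrank K ↥(Simp.span (σ ∪ τ)) / 2 ≤ g + 1 := by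
        have := hgen
        rwa [Simp.genus, hradU0, Nat.sub_zero] at this
      have heqdim : finrank K ↥(Simp.span σ) = finrank K ↥(Simp.span (σ ∪ τ)) := by omega
      have heq : Simp.span σ = Simp.span (σ ∪ τ) :=
        Submodule.eq_of_le_of_finrank_le hle (le_of_eq heqdim.symm)
      rw [heq] at hσnotsymp
      exact hσnotsymp hsymp
  · -- counting disjunct
    have hf0 : ((σ ∪ τ).filter (fun L => L ≤ Simp.rad ω (Simp.span (σ ∪ τ)))).card = 0 := by
      rw [Finset.card_eq_zero, Finset.filter_eq_empty_iff]
      exact hkey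
    omega
end

section
/- Let V be a symplectic K-vector space and let v_0, …, v_{2g+1} be vectors spanning a symplectic subspace W of genus g+1. For indices i < j, suppose the vectors v_0, …, v̂_i, …, v̂_j, …, v_{2g+1} (omitting v_i and v_j) span a subspace W_{ij} ⊆ W of dimension 2g. Then W_{ij} is symplectic (of genus g) if and only if v_j has nonzero coefficient when the radical generator a_i of span(v_0,…,v̂_i,…,v_{2g+1}) is written as a linear combination of v_0, …, v̂_i, …, v_{2g+1}. Moreover, in that case the projection of the line ⟨v_i⟩ onto W_{ij}^⊥ equals the line spanned by a_j and the projection of ⟨v_j⟩ onto W_{ij}^⊥ equals the line spanned by a_i. -/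
open Module LinearMap

section Helpers

variable {K : Type*} [Field K] {V : Type*} [AddCommGroup V] [Module K V]

lemma skew_of_alt (ω : LinearMap.BilinForm K V) (halt : ∀ x : V, ω x x = 0)
    (a b : V) : ω a b = -ω b a := by
  have h := halt (a + b)
  simp only [map_add, LinearMap.add_apply, halt a, halt b, zero_add, add_zero] at h
  linear_combination h

lemma exists_coeffs {n : ℕ} (v : Fin n → V) (s : Set (Fin n)) {y : V}
    (hy : y ∈ Submodule.span K (v '' s)) :
    ∃ c : Fin n → K, (∀ k, k ∉ s → c k = 0) ∧ y = ∑ k, c k • v k := by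
  rw [Finsupp.mem_span_image_iff_linearCombination] at hy
  obtain ⟨l, hl, hly⟩ := hy
  refine ⟨l, fun k hk => ?_, ?_⟩
  · by_contra h
    exact hk (hl (Finsupp.mem_support_iff.2 h))
  · rw [← hly, Finsupp.linearCombination_apply, Finsupp.sum_fintype]
    simp

lemma sum_mem_span {n : ℕ} (v : Fin n → V) (s : Set (Fin n)) (c : Fin n → K)
    (hc : ∀ k, k ∉ s → c k = 0) :
    ∑ k, c k • v k ∈ Submodule.span K (v '' s) := by
  refine Submodule.sum_mem _ fun k _ => ?_
  by_cases h : k ∈ s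
  · exact Submodule.smul_mem _ _ (Submodule.subset_span ⟨k, h, rfl⟩)
  · simp [hc k h]

/-- The key projection lemma: if `a ≠ 0` is orthogonal to `Wij` (the span of the `v k`,
`k ≠ p, q`), has an expansion with zero `p`-coefficient, and `Wij` is symplectic, then the
projection of `v q` to the orthogonal complement of `Wij` spans the same line as `a`. -/
lemma proj_key (ω : LinearMap.BilinForm K V) (halt : ∀ x : V, ω x x = 0)
    {n : ℕ} (v : Fin n → V) (p q : Fin n) (hpq : p ≠ q)
    (Wij : Submodule K V) (hWij : Wij = Submodule.span K (v '' {k | k ≠ p ∧ k ≠ q}))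
    (a : V) (ha : a ≠ 0) (haperp : ∀ y ∈ Wij, ω y a = 0)
    (c : Fin n → K) (hcp : c p = 0) (hsum : a = ∑ k, c k • v k)
    (hsymp : ∀ x ∈ Wij, (∀ y ∈ Wij, ω x y = 0) → x = 0) :
    ∃ x ∈ Wij, v q - x ∈ BilinForm.orthogonal ω Wij ∧
      Submodule.span K {v q - x} = Submodule.span K {a} := by
  have hsub : a - c q • v q ∈ Wij := by
    have heq : a - c q • v q = ∑ k, (if k = q then 0 else c k) • v k := by
      rw [hsum, show (c q • v q : V) = ∑ k, (if k = q then c q • v q else 0) by simp,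
        ← Finset.sum_sub_distrib]
      refine Finset.sum_congr rfl fun k _ => ?_
      by_cases h : k = q <;> simp [h]
    rw [heq, hWij]
    refine sum_mem_span v _ _ fun k hk => ?_
    simp only [Set.mem_setOf_eq, not_and_or, not_not] at hk
    rcases hk with h | h
    · simp [h, hpq, hcp]
    · simp [h]
  have hcq : c q ≠ 0 := by
    intro h
    rw [h, zero_smul, sub_zero] at hsub
    exact ha (hsymp a hsub fun y hy => by
      rw [skew_of_alt ω halt a y, haperp y hy, neg_zero])
  refine ⟨v q - (c q)⁻¹ • a, ?_, ?_, ?_⟩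
  · have : v q - (c q)⁻¹ • a = (-(c q)⁻¹) • (a - c q • v q) := by
      rw [neg_smul, smul_sub, smul_smul, inv_mul_cancel₀ hcq, one_smul, neg_sub]
    rw [this]
    exact Submodule.smul_mem _ _ hsub
  · rw [sub_sub_cancel]
    intro y hy
    show ω y ((c q)⁻¹ • a) = 0
    rw [map_smul, smul_eq_mul, haperp y hy, mul_zero]
  · rw [sub_sub_cancel]
    exact Submodule.span_singleton_smul_eq (isUnit_iff_ne_zero.2 (inv_ne_zero hcq)) a

end Helpers

/-- Let `v_0, …, v_{2g+1}` span a symplectic subspace `W` of genus `g+1`,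
let `i < j`, and suppose omitting `v_i, v_j` yields a `2g`-dimensional subspace `W_{ij}`.
Let `a_i` (resp. `a_j`) generate the one-dimensional radical of the span obtained by omitting
only `v_i` (resp. only `v_j`).  Then `W_{ij}` is symplectic iff in any expression of `a_i`
as a linear combination of `v_0, …, v̂_i, …, v_{2g+1}` the coefficient of `v_j` is nonzero;
and in that case the projection of the line `⟨v_i⟩` to `W_{ij}^⊥` is `⟨a_j⟩` and the
projection of `⟨v_j⟩` is `⟨a_i⟩`. -/
theorem symplectic_omit_two_criterion
    (K : Type*) [Field K] (V : Type*) [AddCommGroup V] [Module K V]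
    [FiniteDimensional K V]
    (ω : LinearMap.BilinForm K V)
    (halt : ∀ x : V, ω x x = 0)
    (hnondeg : ∀ x : V, (∀ y : V, ω x y = 0) → x = 0)
    (g : ℕ) (v : Fin (2 * g + 2) → V)
    (W : Submodule K V) (hWspan : W = Submodule.span K (Set.range v))
    (hWsymp : ∀ x ∈ W, (∀ y ∈ W, ω x y = 0) → x = 0)
    (hWdim : finrank K ↥W = 2 * g + 2)
    (i j : Fin (2 * g + 2)) (hij : i < j)
    (Wij : Submodule K V)
    (hWij : Wij = Submodule.span K (v '' {k | k ≠ i ∧ k ≠ j}))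
    (hWijdim : finrank K ↥Wij = 2 * g)
    (Ui Uj : Submodule K V)
    (hUi : Ui = Submodule.span K (v '' {k | k ≠ i}))
    (hUj : Uj = Submodule.span K (v '' {k | k ≠ j}))
    (ai aj : V) (hai : ai ≠ 0) (haj : aj ≠ 0)
    (haiRad : Submodule.span K {ai} = Ui ⊓ BilinForm.orthogonal ω Ui)
    (hajRad : Submodule.span K {aj} = Uj ⊓ BilinForm.orthogonal ω Uj) :
    ((∀ x ∈ Wij, (∀ y ∈ Wij, ω x y = 0) → x = 0) ↔
      (∀ c : Fin (2 * g + 2) → K, c i = 0 → ai = ∑ k, c k • v k → c j ≠ 0)) ∧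
    ((∀ x ∈ Wij, (∀ y ∈ Wij, ω x y = 0) → x = 0) →
      (∃ x ∈ Wij, v i - x ∈ BilinForm.orthogonal ω Wij ∧
        Submodule.span K {v i - x} = Submodule.span K {aj}) ∧
      (∃ x ∈ Wij, v j - x ∈ BilinForm.orthogonal ω Wij ∧
        Submodule.span K {v j - x} = Submodule.span K {ai})) := by
  have skew := skew_of_alt ω halt
  have hvWij : ∀ k, k ≠ i → k ≠ j → v k ∈ Wij := fun k h1 h2 =>
    hWij ▸ Submodule.subset_span ⟨k, ⟨h1, h2⟩, rfl⟩
  have hWijUi : Wij ≤ Ui := by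
    rw [hWij, hUi]
    exact Submodule.span_mono (Set.image_mono fun k hk => hk.1)
  have hWijUj : Wij ≤ Uj := by
    rw [hWij, hUj]
    exact Submodule.span_mono (Set.image_mono fun k hk => hk.2)
  have haimem : ai ∈ Ui ⊓ BilinForm.orthogonal ω Ui := by
    rw [← haiRad]; exact Submodule.mem_span_singleton_self ai
  have hajmem : aj ∈ Uj ⊓ BilinForm.orthogonal ω Uj := by
    rw [← hajRad]; exact Submodule.mem_span_singleton_self aj
  have haiUi : ai ∈ Ui := haimem.1
  have hajUj : aj ∈ Uj := hajmem.1
  have haiperp : ∀ y ∈ Ui, ω y ai = 0 := fun y hy => haimem.2 y hy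
  have hajperp : ∀ y ∈ Uj, ω y aj = 0 := fun y hy => hajmem.2 y hy
  constructor
  · constructor
    · -- symplectic → coefficient of v j nonzero
      intro hsymp c hci hsum hcj
      have hmem : ai ∈ Wij := by
        rw [hsum, hWij]
        refine sum_mem_span v _ _ fun k hk => ?_
        simp only [Set.mem_setOf_eq, not_and_or, not_not] at hk
        rcases hk with h | h
        · rw [h, hci]
        · rw [h, hcj]
      exact hai (hsymp ai hmem fun y hy => by
        rw [skew ai y, haiperp y (hWijUi hy), neg_zero])
    · -- coefficient criterion → symplectic
      intro hc x hx hperp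
      by_contra hx0
      obtain ⟨c, hc0, hsum⟩ := exists_coeffs v {k | k ≠ i} (by rw [hUi] at haiUi; exact haiUi)
      have hci : c i = 0 := hc0 i (by simp)
      have hcj : c j ≠ 0 := hc c hci hsum
      have hxai : ω x ai = 0 := haiperp x (hWijUi hx)
      have hsum2 : ω x ai = c j * ω x (v j) := by
        rw [hsum, map_sum]
        simp only [map_smul, smul_eq_mul]
        rw [Finset.sum_eq_single j]
        · intro b _ hbj
          by_cases hbi : b = i
          · rw [hbi, hci, zero_mul]
          · rw [hperp (v b) (hvWij b hbi hbj), mul_zero]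
        · intro h
          exact absurd (Finset.mem_univ j) h
      have hxvj : ω x (v j) = 0 := by
        have := hsum2.symm.trans hxai
        exact (mul_eq_zero.1 this).resolve_left hcj
      have hxUi : ∀ y ∈ Ui, ω x y = 0 := by
        intro y hy
        rw [hUi] at hy
        have hle : Submodule.span K (v '' {k | k ≠ i}) ≤ LinearMap.ker (ω x) := by
          rw [Submodule.span_le]
          rintro _ ⟨k, hk, rfl⟩
          simp only [SetLike.mem_coe, LinearMap.mem_ker]
          by_cases hkj : k = j
          · rw [hkj]; exact hxvj
          · exact hperp (v k) (hvWij k hk hkj)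
        exact hle hy
      have hxorth : x ∈ BilinForm.orthogonal ω Ui := fun n hn => by
        show ω n x = 0
        rw [skew n x, hxUi n hn, neg_zero]
      have hxspan : x ∈ Submodule.span K {ai} := by
        rw [haiRad]; exact ⟨hWijUi hx, hxorth⟩
      obtain ⟨t, ht⟩ := Submodule.mem_span_singleton.1 hxspan
      have ht0 : t ≠ 0 := fun h => hx0 (by rw [← ht, h, zero_smul])
      have haiWij : ai ∈ Wij := by
        rw [show ai = t⁻¹ • x by rw [← ht, smul_smul, inv_mul_cancel₀ ht0, one_smul]]
        exact Submodule.smul_mem _ _ hx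
      rw [hWij] at haiWij
      obtain ⟨c', hc'0, hsum'⟩ := exists_coeffs v {k | k ≠ i ∧ k ≠ j} haiWij
      exact hc c' (hc'0 i (by simp)) hsum' (hc'0 j (by simp))
  · -- projections
    intro hsymp
    constructor
    · -- project v i, get aj
      obtain ⟨d, hd0, hdsum⟩ := exists_coeffs v {k | k ≠ j} (by rw [hUj] at hajUj; exact hajUj)
      have hWij' : Wij = Submodule.span K (v '' {k | k ≠ j ∧ k ≠ i}) := by
        rw [hWij]
        congr 1
        exact congrArg (v '' ·) (Set.ext fun k => and_comm)
      exact proj_key ω halt v j i hij.ne' Wij hWij' aj haj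
        (fun y hy => hajperp y (hWijUj hy)) d (hd0 j (by simp)) hdsum hsymp
    · -- project v j, get ai
      obtain ⟨c, hc0, hcsum⟩ := exists_coeffs v {k | k ≠ i} (by rw [hUi] at haiUi; exact haiUi)
      exact proj_key ω halt v i j hij.ne Wij hWij ai hai
        (fun y hy => haiperp y (hWijUi hy)) c (hc0 i (by simp)) hcsum hsymp
end

section
/- Let R be a Euclidean domain with a multiplicative norm, and let p ∈ R be a non-unit element of minimal norm among non-units. Then p is prime in R, and the natural map on unit groups R^× → (R/(p))^× is surjective. -/
/-! Dividing by `p` with remainder, every `a : R` is congruent mod `p` to a remainder `r` with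
`r = 0` or `N r < N p`; by minimality of `N p` a nonzero remainder is a unit. Hence every nonzero
class of `R ⧸ (p)` is the image of a unit of `R`, so `R ⧸ (p)` is a field, `(p)` is maximal and
`p` is prime. -/

theorem isField_of_forall_ne_zero_isUnit {S : Type*} [CommRing S] [Nontrivial S]
    (h : ∀ x : S, x ≠ 0 → IsUnit x) : IsField S := by
  by_contra hS
  obtain ⟨x, hx0, hxu⟩ := Ring.exists_not_isUnit_of_not_isField hS
  exact hxu (h x hx0)

section MinimalNorm

variable {R : Type*} [CommRing R] {N : R → ℕ} {p : R}

theorem eq_zero_or_exists_unit_mk_eq_of_minimal_norm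
    (hdiv : ∀ a b : R, b ≠ 0 → ∃ q r : R, a = b * q + r ∧ (r = 0 ∨ N r < N b))
    (hp0 : p ≠ 0) (hmin : ∀ x : R, x ≠ 0 → ¬ IsUnit x → N p ≤ N x)
    (x : R ⧸ Ideal.span {p}) :
    x = 0 ∨ ∃ w : Rˣ, Ideal.Quotient.mk (Ideal.span {p}) (w : R) = x := by
  obtain ⟨a, rfl⟩ := Ideal.Quotient.mk_surjective x
  obtain ⟨q, r, rfl, hr⟩ := hdiv a p hp0
  have hmk : Ideal.Quotient.mk (Ideal.span {p}) (p * q + r) = Ideal.Quotient.mk _ r := by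
    rw [map_add, Ideal.Quotient.eq_zero_iff_mem.mpr (Ideal.mul_mem_right q _
      (Ideal.mem_span_singleton_self p)), zero_add]
  rw [hmk]
  rcases eq_or_ne r 0 with rfl | hr0
  · exact Or.inl (map_zero _)
  · have hru : IsUnit r := by
      by_contra hru
      exact (hr.resolve_left hr0).not_ge (hmin r hr0 hru)
    exact Or.inr ⟨hru.unit, rfl⟩

theorem isMaximal_span_singleton_of_minimal_norm
    (hdiv : ∀ a b : R, b ≠ 0 → ∃ q r : R, a = b * q + r ∧ (r = 0 ∨ N r < N b))
    (hp0 : p ≠ 0) (hpu : ¬ IsUnit p) (hmin : ∀ x : R, x ≠ 0 → ¬ IsUnit x → N p ≤ N x) :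
    (Ideal.span {p}).IsMaximal := by
  have : Nontrivial (R ⧸ Ideal.span {p}) :=
    Ideal.Quotient.nontrivial_iff.mpr (Ideal.span_singleton_ne_top hpu)
  refine Ideal.Quotient.maximal_of_isField _ (isField_of_forall_ne_zero_isUnit fun x hx ↦ ?_)
  obtain ⟨w, rfl⟩ := (eq_zero_or_exists_unit_mk_eq_of_minimal_norm hdiv hp0 hmin x).resolve_left hx
  exact w.isUnit.map _

end MinimalNorm

theorem minimal_norm_element_prime_and_units_surjective_general
    (R : Type*) [CommRing R]
    (N : R → ℕ)
    (hdiv : ∀ a b : R, b ≠ 0 → ∃ q r : R, a = b * q + r ∧ (r = 0 ∨ N r < N b))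
    (p : R) (hp0 : p ≠ 0) (hpu : ¬ IsUnit p)
    (hmin : ∀ x : R, x ≠ 0 → ¬ IsUnit x → N p ≤ N x) :
    Prime p ∧
      ∀ u : (R ⧸ Ideal.span ({p} : Set R))ˣ,
        ∃ w : Rˣ, Ideal.Quotient.mk (Ideal.span ({p} : Set R)) (w : R) = (u : R ⧸ Ideal.span ({p} : Set R)) := by
  have hmax := isMaximal_span_singleton_of_minimal_norm hdiv hp0 hpu hmin
  have : Nontrivial (R ⧸ Ideal.span {p}) := Ideal.Quotient.nontrivial_iff.mpr hmax.ne_top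
  refine ⟨(Ideal.span_singleton_prime hp0).mp hmax.isPrime, fun u ↦ ?_⟩
  exact (eq_zero_or_exists_unit_mk_eq_of_minimal_norm hdiv hp0 hmin u).resolve_left u.ne_zero

/-- Let `R` be a Euclidean domain with a multiplicative norm `N`
(division with remainder holds with respect to `N`), and let `p` be a nonzero non-unit of
minimal norm among nonzero non-units.  Then `p` is prime, and the natural map
`R^× → (R/(p))^×` on unit groups is surjective. -/
theorem minimal_norm_element_prime_and_units_surjective
    (R : Type*) [CommRing R] [IsDomain R]
    (N : R → ℕ)
    (hNmul : ∀ a b : R, a ≠ 0 → b ≠ 0 → N (a * b) = N a * N b)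
    (hdiv : ∀ a b : R, b ≠ 0 → ∃ q r : R, a = b * q + r ∧ (r = 0 ∨ N r < N b))
    (p : R) (hp0 : p ≠ 0) (hpu : ¬ IsUnit p)
    (hmin : ∀ x : R, x ≠ 0 → ¬ IsUnit x → N p ≤ N x) :
    Prime p ∧
      ∀ u : (R ⧸ Ideal.span ({p} : Set R))ˣ,
        ∃ w : Rˣ, Ideal.Quotient.mk (Ideal.span ({p} : Set R)) (w : R) = (u : R ⧸ Ideal.span ({p} : Set R)) :=
  minimal_norm_element_prime_and_units_surjective_general R N hdiv p hp0 hpu hmin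
end
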